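/- arXiv:1905.03034 — 2 statements merged into one kernel-verified Lean document; each statement's English description precedes it below -/
import Mathlib

section
/- Let {X_n} and {Y_n} be two asymptotically equivalent sequences of n×n complex matrices, and let P be any fixed polynomial whose degree is independent of n. Then the sequences {P(X_n)} and {P(Y_n)} are asymptotically equivalent; in particular, ‖P(X_n) − P(Y_n)‖_1 = o(n) as n → ∞ and both {P(X_n)} and {P(Y_n)} are uniformly bounded in spectral norm by a constant independent of n. -/
open MeasureTheory Filter Matrix Polynomial Asymptotics
open scoped Classical

noncomputable section

/-- The domain `(-π, π]`. -/
def Tset : Set ℝ := Set.Ioc (-Real.pi) Real.pi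

/-- Lebesgue measure restricted to `(-π, π]`. -/
def muT : Measure ℝ := volume.restrict Tset

/-- The `k`-th Fourier coefficient of `f` on `(-π, π]`. -/
def fhat (f : ℝ → ℂ) (k : ℤ) : ℂ :=
  (1 / (2 * (Real.pi : ℂ))) *
    ∫ t in Tset, f t * Complex.exp (-Complex.I * (k : ℂ) * (t : ℂ))

/-- The `n × n` `g`-Toeplitz matrix of symbol `f`. -/
def gToeplitz (n g : ℕ) (f : ℝ → ℂ) : Matrix (Fin n) (Fin n) ℂ :=
  Matrix.of fun r s => fhat f ((r : ℤ) - (g : ℤ) * (s : ℤ))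

/-- `f ∈ L^∞(-π, π]`. -/
def MemLinf (f : ℝ → ℂ) : Prop := MeasureTheory.MemLp f ⊤ muT

/-- The `L^∞` norm of `f` on `(-π, π]`. -/
def linfNorm (f : ℝ → ℂ) : ℝ := (eLpNorm f ⊤ muT).toReal

/-- The singular values of a complex square matrix. -/
def singVals {N : ℕ} (X : Matrix (Fin N) (Fin N) ℂ) : Fin N → ℝ :=
  fun i => Real.sqrt ((Matrix.isHermitian_conjTranspose_mul_self X).eigenvalues i)

/-- The trace norm (Schatten 1-norm): sum of the singular values. -/
def traceNorm {N : ℕ} (X : Matrix (Fin N) (Fin N) ℂ) : ℝ :=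
  ∑ i, singVals X i

/-- The Schatten `q`-norm. -/
def schattenNorm {N : ℕ} (q : ℝ) (X : Matrix (Fin N) (Fin N) ℂ) : ℝ :=
  (∑ i, singVals X i ^ q) ^ (1 / q)

/-- The spectral norm: operator norm induced by the Euclidean norm. -/
def specNorm {N : ℕ} (X : Matrix (Fin N) (Fin N) ℂ) : ℝ :=
  ‖Matrix.toEuclideanCLM (𝕜 := ℂ) X‖

/-- The eigenvalues of a complex matrix, with multiplicity. -/
def eigs {N : ℕ} (A : Matrix (Fin N) (Fin N) ℂ) : Multiset ℂ := A.charpoly.roots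

/-- The number of eigenvalues of `A` lying outside the `ε`-neighborhood of `S`. -/
def outCount {N : ℕ} (A : Matrix (Fin N) (Fin N) ℂ) (S : Set ℂ) (ε : ℝ) : ℕ :=
  Multiset.card (Multiset.filter (fun z => ∀ w ∈ S, ε ≤ dist z w) (eigs A))

/-- Weak clustering (in the sense of eigenvalues) of a matrix sequence at a set `S`. -/
def weakCluster (d : ℕ → ℕ) (A : ∀ n, Matrix (Fin (d n)) (Fin (d n)) ℂ) (S : Set ℂ) : Prop :=
  ∀ ε : ℝ, 0 < ε →
    Tendsto (fun n => (outCount (A n) S ε : ℝ) / (d n : ℝ)) atTop (nhds 0)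

/-- Distribution in the sense of eigenvalues as the pair `(θ, G)`. -/
def distEig (d : ℕ → ℕ) (A : ∀ n, Matrix (Fin (d n)) (Fin (d n)) ℂ)
    (θ : ℝ → ℂ) (G : Set ℝ) : Prop :=
  ∀ F : ℂ → ℂ, Continuous F → HasCompactSupport F →
    Tendsto (fun n => ((eigs (A n)).map F).sum / (d n : ℂ)) atTop
      (nhds ((∫ t in G, F (θ t)) / (((volume G).toReal : ℝ) : ℂ)))

/-- The essential range of `h` viewed as a function on `G`. -/
def essRange (h : ℝ → ℂ) (G : Set ℝ) : Set ℂ :=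
  {z : ℂ | ∀ ε : ℝ, 0 < ε → 0 < volume {t ∈ G | dist (h t) z < ε}}

/-- `Area(W)`: the complement of the unbounded connected component of `ℂ \ W`. -/
def area (W : Set ℂ) : Set ℂ :=
  {z : ℂ | z ∈ W ∨ Bornology.IsBounded (connectedComponentIn Wᶜ z)}

/-- `θ_g`: `1` if `g = 1` and `0` otherwise. -/
def thetag (g : ℕ) : ℂ := if g = 1 then 1 else 0

/-- The Cesàro (Fejér) mean of order `m` of `f`. -/
def cesaro (f : ℝ → ℂ) (m : ℕ) : ℝ → ℂ := fun t =>
  (1 / ((m : ℂ) + 1)) * ∑ r ∈ Finset.range (m + 1),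
    ∑ k ∈ Finset.Icc (-(r : ℤ)) (r : ℤ), fhat f k * Complex.exp (Complex.I * (k : ℂ) * (t : ℂ))

/-- The operator `u ↦ P_n^⊥ (P · (u ∘ h_g))`, written out through Fourier coefficients. -/
def TngOp (n g : ℕ) (P : ℝ → ℂ) (u : ℝ → ℂ) : ℝ → ℂ := fun t =>
  ∑ j ∈ Finset.range n,
    fhat (fun s => P s * u ((g : ℝ) * s)) (j : ℤ) * Complex.exp (Complex.I * (j : ℂ) * (t : ℂ))

/-- The annihilation hypothesis: for every `m` and `n`, the operator
`T_{n,g}^{P_{m,f₁} P_{m,f₂}}` annihilates `e^{iglt} - e^{ilt}` for every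
`l ∈ {[m/g], …, [(n-1-m)/g]}`. -/
def AnnihilHyp (g : ℕ) (f₁ f₂ : ℝ → ℂ) : Prop :=
  ∀ m n l : ℕ, m / g ≤ l → l ≤ (n - 1 - m) / g →
    TngOp n g (fun t => cesaro f₁ m t * cesaro f₂ m t)
      (fun t => Complex.exp (Complex.I * ((g * l : ℕ) : ℂ) * (t : ℂ)) -
        Complex.exp (Complex.I * ((l : ℕ) : ℂ) * (t : ℂ))) = 0

/-- `⌈n/g⌉` as a natural number. -/
def mug (n g : ℕ) : ℕ := (n + g - 1) / g


/-- `[0 | 𝒯_{n,g}]`: the last `n - ⌈n/g⌉` columns of `T_{n,g}(f)` padded by zero columns. -/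
def padT (n g : ℕ) (f : ℝ → ℂ) : Matrix (Fin n) (Fin n) ℂ :=
  Matrix.of fun r s => if (s : ℕ) < mug n g then 0 else gToeplitz n g f r s

/-- `[Ẑ_{n,g} | 0]`: the first `⌈n/g⌉` columns of `Z_{n,g}` padded by zero columns. -/
def ZhatPad (n g : ℕ) : Matrix (Fin n) (Fin n) ℂ :=
  Matrix.of fun r s =>
    if (s : ℕ) < mug n g ∧ ((r : ℤ) - (g : ℤ) * (s : ℤ)) % (n : ℤ) = 0 then 1 else 0

/-- Asymptotic equivalence of two matrix sequences. -/
def AsympEquiv (A B : ∀ n : ℕ, Matrix (Fin n) (Fin n) ℂ) : Prop :=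
  (∃ C : ℝ, ∀ n, specNorm (A n) ≤ C ∧ specNorm (B n) ≤ C) ∧
  (fun n => traceNorm (A n - B n)) =o[atTop] (fun n => (n : ℝ))

end

/-! The trace norm is dual to the spectral norm: `|tr (X U)| ≤ ‖X‖₁ ‖U‖`, by Cauchy–Schwarz in
an orthonormal eigenbasis of `Xᴴ X`, with equality for a contraction `U` read off from the singular
value decomposition of `X`. Hence `‖·‖₁` is subadditive and `‖A B‖₁ ≤ min (‖A‖ ‖B‖₁) (‖A‖₁ ‖B‖)`.
Telescoping `Aʳ⁺¹ - Bʳ⁺¹ = Aʳ (A - B) + (Aʳ - Bʳ) B` then gives `‖P(A) - P(B)‖₁ ≤ K ‖A - B‖₁`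
with `K` depending only on `P` and a common bound for `‖A‖` and `‖B‖`, so the `o(n)` bound
transfers from `X_n - Y_n` to `P(X_n) - P(Y_n)`. -/

open scoped Matrix.Norms.L2Operator InnerProductSpace

namespace Matrix

variable {𝕜 n : Type*} [RCLike 𝕜] [Fintype n] [DecidableEq n]

lemma trace_eq_sum_inner_toEuclideanCLM (M : Matrix n n 𝕜)
    (b : OrthonormalBasis n 𝕜 (EuclideanSpace 𝕜 n)) :
    M.trace = ∑ i, ⟪b i, toEuclideanCLM (𝕜 := 𝕜) M (b i)⟫_𝕜 := by
  rw [← Matrix.trace_toLin_eq M (EuclideanSpace.basisFun n 𝕜).toBasis]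
  exact LinearMap.trace_eq_sum_inner (toEuclideanLin M) b

lemma inner_toEuclideanCLM_toEuclideanCLM (A B : Matrix n n 𝕜) (x y : EuclideanSpace 𝕜 n) :
    ⟪toEuclideanCLM (𝕜 := 𝕜) A x, toEuclideanCLM (𝕜 := 𝕜) B y⟫_𝕜 =
      ⟪x, toEuclideanCLM (𝕜 := 𝕜) (Aᴴ * B) y⟫_𝕜 := by
  rw [map_mul, ← star_eq_conjTranspose, map_star, ContinuousLinearMap.star_eq_adjoint,
    ContinuousLinearMap.mul_def, ContinuousLinearMap.comp_apply,
    ContinuousLinearMap.adjoint_inner_right]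

lemma norm_toEuclideanCLM_eigenvectorBasis (X : Matrix n n 𝕜) (i : n) :
    ‖toEuclideanCLM (𝕜 := 𝕜) X ((isHermitian_conjTranspose_mul_self X).eigenvectorBasis i)‖ =
      √((isHermitian_conjTranspose_mul_self X).eigenvalues i) := by
  set hH := isHermitian_conjTranspose_mul_self X
  set b := hH.eigenvectorBasis
  have hb : toEuclideanCLM (𝕜 := 𝕜) (Xᴴ * X) (b i) = (hH.eigenvalues i : 𝕜) • b i := by
    apply WithLp.ofLp_injective 2
    rw [ofLp_toEuclideanCLM, hH.mulVec_eigenvectorBasis, WithLp.ofLp_smul,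
      RCLike.real_smul_eq_coe_smul (K := 𝕜)]
  rw [← Real.sqrt_sq (norm_nonneg _), @norm_sq_eq_re_inner 𝕜, inner_toEuclideanCLM_toEuclideanCLM,
    hb, inner_smul_right, inner_self_eq_norm_sq_to_K, b.orthonormal.1 i]
  simp

lemma conjTranspose_mul_self_mul_eigenvectorUnitary {X : Matrix n n 𝕜}
    (hH : (Xᴴ * X).IsHermitian) :
    (X * (hH.eigenvectorUnitary : Matrix n n 𝕜))ᴴ * (X * (hH.eigenvectorUnitary : Matrix n n 𝕜)) =
      diagonal (RCLike.ofReal ∘ hH.eigenvalues) := by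
  have h := hH.conjStarAlgAut_star_eigenvectorUnitary
  rw [Unitary.conjStarAlgAut_star_apply] at h
  simpa [star_eq_conjTranspose, conjTranspose_mul, mul_assoc] using h

lemma l2_opNorm_one_le : ‖(1 : Matrix n n 𝕜)‖ ≤ 1 := by
  rw [← l2_opNorm_toEuclideanCLM, map_one]
  exact ContinuousLinearMap.norm_id_le

lemma l2_opNorm_pow_le {M : Matrix n n 𝕜} {C : ℝ} (hM : ‖M‖ ≤ C) : ∀ r : ℕ, ‖M ^ r‖ ≤ C ^ r
  | 0 => by simpa using l2_opNorm_one_le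
  | r + 1 => (norm_pow_le' M r.succ_pos).trans (pow_le_pow_left₀ (norm_nonneg M) hM _)

lemma l2_opNorm_aeval_le {M : Matrix n n 𝕜} {C : ℝ} (hM : ‖M‖ ≤ C) (P : 𝕜[X]) :
    ‖aeval M P‖ ≤ ∑ i ∈ Finset.range (P.natDegree + 1), ‖P.coeff i‖ * C ^ i := by
  rw [aeval_eq_sum_range]
  refine (norm_sum_le _ _).trans (Finset.sum_le_sum fun i _ => ?_)
  rw [norm_smul]
  exact mul_le_mul_of_nonneg_left (l2_opNorm_pow_le hM i) (norm_nonneg _)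

end Matrix

section TraceNorm

variable {N : ℕ}

lemma traceNorm_nonneg (X : Matrix (Fin N) (Fin N) ℂ) : 0 ≤ traceNorm X :=
  Finset.sum_nonneg fun _ _ => Real.sqrt_nonneg _

lemma norm_trace_mul_le (X U : Matrix (Fin N) (Fin N) ℂ) :
    ‖(X * U).trace‖ ≤ traceNorm X * ‖U‖ := by
  set b := (isHermitian_conjTranspose_mul_self X).eigenvectorBasis
  calc ‖(X * U).trace‖
      = ‖∑ i, ⟪toEuclideanCLM (𝕜 := ℂ) Uᴴ (b i), toEuclideanCLM (𝕜 := ℂ) X (b i)⟫_ℂ‖ := by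
        simp_rw [trace_mul_comm X, trace_eq_sum_inner_toEuclideanCLM _ b,
          inner_toEuclideanCLM_toEuclideanCLM, conjTranspose_conjTranspose]
    _ ≤ ∑ i, ‖toEuclideanCLM (𝕜 := ℂ) Uᴴ (b i)‖ * ‖toEuclideanCLM (𝕜 := ℂ) X (b i)‖ :=
        (norm_sum_le _ _).trans (Finset.sum_le_sum fun i _ => norm_inner_le_norm _ _)
    _ ≤ ∑ i, ‖U‖ * singVals X i := by
        refine Finset.sum_le_sum fun i _ => ?_
        rw [norm_toEuclideanCLM_eigenvectorBasis]
        refine mul_le_mul_of_nonneg_right ?_ (Real.sqrt_nonneg _)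
        calc _ ≤ ‖toEuclideanCLM (𝕜 := ℂ) Uᴴ‖ * ‖b i‖ := (toEuclideanCLM (𝕜 := ℂ) Uᴴ).le_opNorm _
          _ = ‖U‖ := by rw [b.orthonormal.1 i, mul_one, l2_opNorm_toEuclideanCLM,
            l2_opNorm_conjTranspose]
    _ = traceNorm X * ‖U‖ := by
        rw [traceNorm, Finset.sum_mul]; exact Finset.sum_congr rfl fun _ _ => mul_comm _ _

lemma exists_norm_le_one_trace_mul_eq_traceNorm (X : Matrix (Fin N) (Fin N) ℂ) :
    ∃ U : Matrix (Fin N) (Fin N) ℂ, ‖U‖ ≤ 1 ∧ (X * U).trace = traceNorm X := by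
  set hH := isHermitian_conjTranspose_mul_self X
  set V : Matrix (Fin N) (Fin N) ℂ := (hH.eigenvectorUnitary : Matrix (Fin N) (Fin N) ℂ)
  -- `0⁻¹ = 0` makes `D` the pseudo-inverse of the diagonal of singular values.
  set D : Matrix (Fin N) (Fin N) ℂ := diagonal fun i => ((singVals X i)⁻¹ : ℝ)
  have hspec : (X * V)ᴴ * (X * V) = diagonal fun i => ((singVals X i ^ 2 : ℝ) : ℂ) := by
    rw [conjTranspose_mul_self_mul_eigenvectorUnitary hH]
    congr 1; funext i
    simp [singVals, Real.sq_sqrt (eigenvalues_conjTranspose_mul_self_nonneg X i)]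
  have hD : Dᴴ = D := by simp [D, diagonal_conjTranspose]
  -- `V D (X V)ᴴ` is the adjoint of the partial isometry in the polar decomposition of `X`.
  refine ⟨V * (D * (X * V)ᴴ), ?_, ?_⟩
  · have hW : ‖X * V * D‖ * ‖X * V * D‖ ≤ 1 := by
      rw [← l2_opNorm_conjTranspose_mul_self, conjTranspose_mul, hD,
        show D * (X * V)ᴴ * (X * V * D) = D * ((X * V)ᴴ * (X * V)) * D by simp only [mul_assoc],
        hspec, diagonal_mul_diagonal, diagonal_mul_diagonal, l2_opNorm_diagonal]
      refine (pi_norm_le_iff_of_nonneg zero_le_one).mpr fun i => ?_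
      rcases eq_or_ne (singVals X i) 0 with hσ | hσ <;> simp [sq, hσ]
    rw [CStarRing.norm_coe_unitary_mul, ← hD, ← conjTranspose_mul, l2_opNorm_conjTranspose]
    nlinarith [norm_nonneg (X * V * D)]
  · calc (X * (V * (D * (X * V)ᴴ))).trace = ((X * V)ᴴ * (X * V) * D).trace := by
          rw [show X * (V * (D * (X * V)ᴴ)) = X * V * D * (X * V)ᴴ by simp only [mul_assoc],
            trace_mul_comm]
          simp only [mul_assoc]
      _ = traceNorm X := by
          rw [hspec, diagonal_mul_diagonal, trace_diagonal, traceNorm]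
          push_cast
          exact Finset.sum_congr rfl fun i _ => by rw [sq, mul_self_mul_inv]

lemma norm_trace_mul_le_traceNorm {X U : Matrix (Fin N) (Fin N) ℂ} (hU : ‖U‖ ≤ 1) :
    ‖(X * U).trace‖ ≤ traceNorm X :=
  (norm_trace_mul_le X U).trans (mul_le_of_le_one_right (traceNorm_nonneg X) hU)

lemma traceNorm_le_of_forall_norm_trace_mul_le {X : Matrix (Fin N) (Fin N) ℂ} {r : ℝ}
    (h : ∀ U : Matrix (Fin N) (Fin N) ℂ, ‖U‖ ≤ 1 → ‖(X * U).trace‖ ≤ r) : traceNorm X ≤ r := by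
  obtain ⟨U, hU, hXU⟩ := exists_norm_le_one_trace_mul_eq_traceNorm X
  simpa [hXU, abs_of_nonneg (traceNorm_nonneg X)] using h U hU

lemma traceNorm_zero : traceNorm (0 : Matrix (Fin N) (Fin N) ℂ) = 0 :=
  le_antisymm (traceNorm_le_of_forall_norm_trace_mul_le fun _ _ => by simp) (traceNorm_nonneg 0)

lemma traceNorm_add_le (A B : Matrix (Fin N) (Fin N) ℂ) :
    traceNorm (A + B) ≤ traceNorm A + traceNorm B :=
  traceNorm_le_of_forall_norm_trace_mul_le fun U hU => by
    rw [add_mul, trace_add]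
    exact (norm_add_le _ _).trans
      (add_le_add (norm_trace_mul_le_traceNorm hU) (norm_trace_mul_le_traceNorm hU))

lemma traceNorm_sum_le {ι : Type*} (s : Finset ι) (A : ι → Matrix (Fin N) (Fin N) ℂ) :
    traceNorm (∑ i ∈ s, A i) ≤ ∑ i ∈ s, traceNorm (A i) :=
  Finset.le_sum_of_subadditive traceNorm traceNorm_zero.le traceNorm_add_le s A

lemma traceNorm_smul_le (c : ℂ) (A : Matrix (Fin N) (Fin N) ℂ) :
    traceNorm (c • A) ≤ ‖c‖ * traceNorm A :=
  traceNorm_le_of_forall_norm_trace_mul_le fun U hU => by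
    rw [smul_mul_assoc, trace_smul, norm_smul]
    exact mul_le_mul_of_nonneg_left (norm_trace_mul_le_traceNorm hU) (norm_nonneg c)

lemma traceNorm_mul_le_norm_mul_traceNorm (A B : Matrix (Fin N) (Fin N) ℂ) :
    traceNorm (A * B) ≤ ‖A‖ * traceNorm B :=
  traceNorm_le_of_forall_norm_trace_mul_le fun U hU => by
    rw [mul_assoc, trace_mul_comm, mul_assoc]
    calc ‖(B * (U * A)).trace‖ ≤ traceNorm B * ‖U * A‖ := norm_trace_mul_le B (U * A)
      _ ≤ traceNorm B * ‖A‖ := by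
          gcongr
          · exact traceNorm_nonneg B
          · exact (l2_opNorm_mul U A).trans (mul_le_of_le_one_left (norm_nonneg A) hU)
      _ = ‖A‖ * traceNorm B := mul_comm _ _

lemma traceNorm_mul_le_traceNorm_mul_norm (A B : Matrix (Fin N) (Fin N) ℂ) :
    traceNorm (A * B) ≤ traceNorm A * ‖B‖ :=
  traceNorm_le_of_forall_norm_trace_mul_le fun U hU => by
    rw [mul_assoc]
    calc ‖(A * (B * U)).trace‖ ≤ traceNorm A * ‖B * U‖ := norm_trace_mul_le A (B * U)
      _ ≤ traceNorm A * ‖B‖ := by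
          gcongr
          · exact traceNorm_nonneg A
          · exact (l2_opNorm_mul B U).trans (mul_le_of_le_one_right (norm_nonneg B) hU)

end TraceNorm

section TraceNormPolynomial

variable {N : ℕ} {A B : Matrix (Fin N) (Fin N) ℂ} {C : ℝ}

lemma traceNorm_pow_sub_pow_le (hA : ‖A‖ ≤ C) (hB : ‖B‖ ≤ C) (r : ℕ) :
    traceNorm (A ^ r - B ^ r) ≤ r * C ^ (r - 1) * traceNorm (A - B) := by
  have hC : 0 ≤ C := (norm_nonneg A).trans hA
  induction r with
  | zero => simp [traceNorm_zero]
  | succ r ih =>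
    have hsplit : A ^ (r + 1) - B ^ (r + 1) = A ^ r * (A - B) + (A ^ r - B ^ r) * B := by
      rw [mul_sub, sub_mul, pow_succ, pow_succ]
      abel
    calc traceNorm (A ^ (r + 1) - B ^ (r + 1))
        ≤ ‖A ^ r‖ * traceNorm (A - B) + traceNorm (A ^ r - B ^ r) * ‖B‖ := by
          rw [hsplit]
          exact (traceNorm_add_le _ _).trans (add_le_add
            (traceNorm_mul_le_norm_mul_traceNorm _ _) (traceNorm_mul_le_traceNorm_mul_norm _ _))
      _ ≤ C ^ r * traceNorm (A - B) + r * C ^ (r - 1) * traceNorm (A - B) * C := by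
          have := traceNorm_nonneg (A - B)
          gcongr
          · exact l2_opNorm_pow_le hA r
      _ = (r + 1 : ℕ) * C ^ (r + 1 - 1) * traceNorm (A - B) := by
          rcases r with _ | r
          · simp
          · simp [pow_succ]
            ring

lemma traceNorm_aeval_sub_aeval_le (hA : ‖A‖ ≤ C) (hB : ‖B‖ ≤ C) (P : ℂ[X]) :
    traceNorm (aeval A P - aeval B P) ≤
      (∑ i ∈ Finset.range (P.natDegree + 1), ‖P.coeff i‖ * (i * C ^ (i - 1))) *
        traceNorm (A - B) := by
  rw [aeval_eq_sum_range, aeval_eq_sum_range, ← Finset.sum_sub_distrib, Finset.sum_mul]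
  refine (traceNorm_sum_le _ _).trans (Finset.sum_le_sum fun i _ => ?_)
  rw [← smul_sub, mul_assoc]
  exact (traceNorm_smul_le _ _).trans
    (mul_le_mul_of_nonneg_left (traceNorm_pow_sub_pow_le hA hB i) (norm_nonneg _))

lemma isBigO_traceNorm_aeval_sub_aeval {X Y : ∀ n : ℕ, Matrix (Fin n) (Fin n) ℂ} {C : ℝ}
    (hX : ∀ n, ‖X n‖ ≤ C) (hY : ∀ n, ‖Y n‖ ≤ C) (P : ℂ[X]) :
    (fun n => traceNorm (aeval (X n) P - aeval (Y n) P)) =O[atTop]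
      (fun n => traceNorm (X n - Y n)) :=
  isBigO_of_le' atTop fun n => by
    rw [Real.norm_of_nonneg (traceNorm_nonneg _), Real.norm_of_nonneg (traceNorm_nonneg _)]
    exact traceNorm_aeval_sub_aeval_le (hX n) (hY n) P

end TraceNormPolynomial

/-- **Lemma (asymptotic equivalence is preserved by fixed polynomials).** -/
theorem asympEquiv_poly
    (X Y : ∀ n : ℕ, Matrix (Fin n) (Fin n) ℂ)
    (hXY : AsympEquiv X Y) (P : Polynomial ℂ) :
    AsympEquiv (fun n => Polynomial.aeval (X n) P) (fun n => Polynomial.aeval (Y n) P) := by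
  obtain ⟨⟨C, hC⟩, hXY⟩ := hXY
  exact ⟨⟨_, fun n => ⟨l2_opNorm_aeval_le (hC n).1 P, l2_opNorm_aeval_le (hC n).2 P⟩⟩,
    (isBigO_traceNorm_aeval_sub_aeval (fun n => (hC n).1) (fun n => (hC n).2) P).trans_isLittleO hXY⟩
end

section
/- Let f ∈ L^∞(−π,π] and let g be a positive integer. Then the spectral norms of the g-Toeplitz matrices are uniformly bounded: ‖T_{n,g}(f)‖ ≤ ‖f‖_{L^∞} for every n. -/
open MeasureTheory Filter Matrix Polynomial Asymptotics
open scoped Classical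

/-!
Write `p_v(t) = ∑ᵣ vᵣ e^{irt}` and `q_u(t) = ∑ₛ uₛ e^{igst}`. Expanding the Fourier coefficients gives
`v* T_{n,g}(f) u = (1/2π) ∫ f · conj(p_v) · q_u` over `(-π, π]`. Since `g > 0`, the frequencies of
`q_u` are distinct, so Parseval gives `‖q_u‖₂² = 2π ‖u‖²` (and likewise for `p_v`); Cauchy–Schwarz
then bounds the integral by `2π ‖f‖_∞ ‖v‖ ‖u‖`, i.e. `|v* T_{n,g}(f) u| ≤ ‖f‖_∞ ‖v‖ ‖u‖`.
-/

open WithLp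
open scoped Real ENNReal ComplexConjugate InnerProductSpace

lemma MeasureTheory.MemLp.ae_norm_le_toReal_eLpNorm_top {α E : Type*} [MeasurableSpace α]
    {μ : Measure α} [NormedAddCommGroup E] {f : α → E} (hf : MemLp f ⊤ μ) :
    ∀ᵐ x ∂μ, ‖f x‖ ≤ (eLpNorm f ⊤ μ).toReal := by
  have hfin := hf.eLpNorm_ne_top
  rw [eLpNorm_exponent_top] at hfin ⊢
  filter_upwards [ae_le_eLpNormEssSup (f := f)] with x hx
  rw [← toReal_enorm]
  exact ENNReal.toReal_mono hfin hx

lemma norm_le_of_forall_norm_inner_le {𝕜 E : Type*} [RCLike 𝕜] [NormedAddCommGroup E]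
    [InnerProductSpace 𝕜 E] {x : E} {C : ℝ} (hC : 0 ≤ C) (h : ∀ y, ‖⟪y, x⟫_𝕜‖ ≤ C * ‖y‖) :
    ‖x‖ ≤ C := by
  rw [← innerSL_apply_norm 𝕜]
  exact (innerSL 𝕜 x).opNorm_le_bound hC fun y => by
    rw [innerSL_apply_apply, norm_inner_symm]; exact h y

lemma Matrix.norm_toEuclideanCLM_le_of_norm_dotProduct_le {ι 𝕜 : Type*} [Fintype ι]
    [DecidableEq ι] [RCLike 𝕜] (A : Matrix ι ι 𝕜) {C : ℝ} (hC : 0 ≤ C)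
    (h : ∀ u v : EuclideanSpace 𝕜 ι, ‖star (ofLp v) ⬝ᵥ (A *ᵥ ofLp u)‖ ≤ C * ‖v‖ * ‖u‖) :
    ‖toEuclideanCLM (𝕜 := 𝕜) A‖ ≤ C := by
  refine (toEuclideanCLM (𝕜 := 𝕜) A).opNorm_le_bound hC fun u =>
    norm_le_of_forall_norm_inner_le (𝕜 := 𝕜) (by positivity) fun v => ?_
  rw [EuclideanSpace.inner_eq_star_dotProduct, ofLp_toEuclideanCLM, dotProduct_comm]
  linarith [h u v]

lemma integral_norm_mul_norm_le_sqrt {α E : Type*} [MeasurableSpace α] {μ : Measure α}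
    [NormedAddCommGroup E] {f g : α → E} (hf : MemLp f 2 μ) (hg : MemLp g 2 μ) :
    ∫ x, ‖f x‖ * ‖g x‖ ∂μ ≤ √(∫ x, ‖f x‖ ^ 2 ∂μ) * √(∫ x, ‖g x‖ ^ 2 ∂μ) := by
  have := integral_mul_norm_le_Lp_mul_Lq .two_two (by simpa using hf) (by simpa using hg)
  simpa [Real.sqrt_eq_rpow] using this

instance isFiniteMeasure_muT : IsFiniteMeasure muT :=
  isFiniteMeasure_restrict.2 measure_Ioc_lt_top.ne

lemma norm_exp_I_mul_intCast_mul (k : ℤ) (t : ℝ) : ‖Complex.exp (Complex.I * k * t)‖ = 1 := by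
  rw [mul_assoc, ← Complex.ofReal_intCast, ← Complex.ofReal_mul, Complex.norm_exp_I_mul_ofReal]

lemma fhat_one (k : ℤ) : fhat (fun _ => 1) k = if k = 0 then 1 else 0 := by
  have hTset : ∫ t in Tset, Complex.exp (-Complex.I * k * t) =
      ∫ t in -π..π, Complex.exp ((-Complex.I * k) * t) :=
    (intervalIntegral.integral_of_le (by linarith [Real.pi_pos])).symm
  rw [fhat]
  simp_rw [one_mul, hTset]
  split_ifs with hk
  · simp [hk]
    field_simp
    ring
  · have hIk : -Complex.I * k ≠ 0 := by simp [hk, Complex.I_ne_zero]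
    have hper : Complex.exp (-Complex.I * k * π) = Complex.exp (-Complex.I * k * (-π : ℝ)) :=
      Complex.exp_eq_exp_iff_exists_int.2 ⟨-k, by push_cast; ring⟩
    rw [integral_exp_mul_complex hIk, hper, sub_self, zero_div, mul_zero]

noncomputable def trigPoly {ι : Type*} [Fintype ι] (c : ι → ℤ) (a : ι → ℂ) (t : ℝ) : ℂ :=
  ∑ i, a i * Complex.exp (Complex.I * c i * t)

section trigPoly

variable {ι κ : Type*} [Fintype ι] [Fintype κ] (c : ι → ℤ) (a : ι → ℂ)

lemma continuous_trigPoly : Continuous (trigPoly c a) := by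
  unfold trigPoly; fun_prop

lemma norm_trigPoly_le (t : ℝ) : ‖trigPoly c a t‖ ≤ ∑ i, ‖a i‖ := by
  refine (norm_sum_le _ _).trans_eq (Finset.sum_congr rfl fun i _ => ?_)
  rw [norm_mul, norm_exp_I_mul_intCast_mul, mul_one]

lemma memLp_trigPoly (p : ℝ≥0∞) : MemLp (trigPoly c a) p muT :=
  .of_bound (continuous_trigPoly c a).aestronglyMeasurable _ (.of_forall (norm_trigPoly_le c a))

lemma conj_trigPoly (t : ℝ) : conj (trigPoly c a t) = trigPoly (-c) (star a) t := by
  simp only [trigPoly, map_sum, map_mul, ← Complex.exp_conj, Complex.conj_I, map_intCast,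
    Complex.conj_ofReal, Pi.neg_apply, Int.cast_neg, Pi.star_apply, RCLike.star_def]
  congr! 3; ring

lemma trigPoly_mul_trigPoly (d : κ → ℤ) (b : κ → ℂ) (t : ℝ) :
    trigPoly c a t * trigPoly d b t =
      trigPoly (fun p : ι × κ => c p.1 + d p.2) (fun p => a p.1 * b p.2) t := by
  simp only [trigPoly, Finset.sum_mul_sum, ← Finset.univ_product_univ, Finset.sum_product]
  refine Finset.sum_congr rfl fun i _ => Finset.sum_congr rfl fun j _ => ?_
  push_cast
  rw [mul_add, add_mul, Complex.exp_add]; ring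

lemma integral_mul_trigPoly {f : ℝ → ℂ} (hf : Integrable f muT) :
    ∫ t, f t * trigPoly c a t ∂muT = 2 * π * ∑ i, a i * fhat f (-c i) := by
  have hterm : ∀ i, ∫ t, f t * (a i * Complex.exp (Complex.I * c i * t)) ∂muT =
      2 * π * (a i * fhat f (-c i)) := by
    intro i
    have hexp : ∀ t : ℝ, f t * (a i * Complex.exp (Complex.I * c i * t)) =
        a i * (f t * Complex.exp (-Complex.I * ((-c i : ℤ) : ℂ) * t)) := by
      intro t; push_cast; ring_nf
    simp_rw [hexp, integral_const_mul, fhat]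
    field_simp
    rfl
  have hint : ∀ i, Integrable (fun t => f t * (a i * Complex.exp (Complex.I * c i * t))) muT :=
    fun i => hf.mul_bdd (by fun_prop) (.of_forall fun t => by
      rw [norm_mul, norm_exp_I_mul_intCast_mul, mul_one])
  simp_rw [trigPoly, Finset.mul_sum, ← hterm]
  exact integral_finsetSum _ fun i _ => hint i

lemma integral_norm_trigPoly_sq (hc : Function.Injective c) :
    ∫ t, ‖trigPoly c a t‖ ^ 2 ∂muT = 2 * π * ∑ i, ‖a i‖ ^ 2 := by
  have hpt : ∀ t, ((‖trigPoly c a t‖ ^ 2 : ℝ) : ℂ) = 1 *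
      trigPoly (fun p : ι × ι => -c p.1 + c p.2) (fun p => star a p.1 * a p.2) t := by
    intro t
    rw [Complex.ofReal_pow, ← Complex.conj_mul', conj_trigPoly, trigPoly_mul_trigPoly, one_mul]
    rfl
  have hδ : ∀ i j, -(-c i + c j) = 0 ↔ i = j := fun i j => by
    rw [neg_add, neg_neg, ← sub_eq_add_neg, sub_eq_zero, hc.eq_iff]
  apply Complex.ofReal_injective
  rw [← integral_complex_ofReal]
  simp_rw [hpt]
  rw [integral_mul_trigPoly _ _ (integrable_const 1), Fintype.sum_prod_type]
  simp only [fhat_one, hδ, mul_ite, mul_one, mul_zero, Finset.sum_ite_eq, Finset.mem_univ,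
    if_true, Pi.star_apply, RCLike.star_def, Complex.conj_mul']
  push_cast
  rfl

end trigPoly

lemma norm_integral_mul_conj_trigPoly_mul_trigPoly_le {ι κ : Type*} [Fintype ι] [Fintype κ]
    {f : ℝ → ℂ} (hf : MemLinf f) {c : ι → ℤ} {d : κ → ℤ} (hc : Function.Injective c)
    (hd : Function.Injective d) (a : ι → ℂ) (b : κ → ℂ) :
    ‖∫ t, f t * (conj (trigPoly c a t) * trigPoly d b t) ∂muT‖ ≤
      2 * π * linfNorm f * √(∑ i, ‖a i‖ ^ 2) * √(∑ j, ‖b j‖ ^ 2) := by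
  have hint : Integrable (fun t => ‖trigPoly c a t‖ * ‖trigPoly d b t‖) muT :=
    ((memLp_trigPoly c a 1).integrable le_rfl).norm.mul_of_top_left (memLp_trigPoly d b ⊤).norm
  calc ‖∫ t, f t * (conj (trigPoly c a t) * trigPoly d b t) ∂muT‖
      ≤ ∫ t, linfNorm f * (‖trigPoly c a t‖ * ‖trigPoly d b t‖) ∂muT := by
        refine norm_integral_le_of_norm_le (hint.const_mul _) ?_
        filter_upwards [hf.ae_norm_le_toReal_eLpNorm_top] with t ht
        rw [norm_mul, norm_mul, RCLike.norm_conj]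
        gcongr
        exact ht
    _ = linfNorm f * ∫ t, ‖trigPoly c a t‖ * ‖trigPoly d b t‖ ∂muT := integral_const_mul _ _
    _ ≤ linfNorm f * (√(∫ t, ‖trigPoly c a t‖ ^ 2 ∂muT) * √(∫ t, ‖trigPoly d b t‖ ^ 2 ∂muT)) := by
        gcongr
        · exact ENNReal.toReal_nonneg
        · exact integral_norm_mul_norm_le_sqrt (memLp_trigPoly c a 2) (memLp_trigPoly d b 2)
    _ = 2 * π * linfNorm f * √(∑ i, ‖a i‖ ^ 2) * √(∑ j, ‖b j‖ ^ 2) := by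
        rw [integral_norm_trigPoly_sq c a hc, integral_norm_trigPoly_sq d b hd,
          Real.sqrt_mul Real.two_pi_pos.le, Real.sqrt_mul Real.two_pi_pos.le, mul_mul_mul_comm,
          Real.mul_self_sqrt Real.two_pi_pos.le]
        ring

lemma star_dotProduct_gToeplitz_mulVec {n g : ℕ} {f : ℝ → ℂ} (hf : Integrable f muT)
    (u v : Fin n → ℂ) :
    star v ⬝ᵥ (gToeplitz n g f *ᵥ u) = (2 * (π : ℂ))⁻¹ * ∫ t, f t *
      (conj (trigPoly (fun r : Fin n => (r : ℤ)) v t) *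
        trigPoly (fun s : Fin n => (g * s : ℤ)) u t) ∂muT := by
  have hπ : (2 * π : ℂ) ≠ 0 := by exact_mod_cast Real.two_pi_pos.ne'
  simp_rw [conj_trigPoly, trigPoly_mul_trigPoly]
  rw [integral_mul_trigPoly _ _ hf, Fintype.sum_prod_type, inv_mul_cancel_left₀ hπ]
  simp only [dotProduct, mulVec, gToeplitz, of_apply, Finset.mul_sum, Pi.star_apply, Pi.neg_apply]
  refine Finset.sum_congr rfl fun r _ => Finset.sum_congr rfl fun s _ => ?_
  rw [neg_add, neg_neg, ← sub_eq_add_neg]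
  ring

lemma norm_star_dotProduct_gToeplitz_mulVec_le {n g : ℕ} (hg : 0 < g) {f : ℝ → ℂ}
    (hf : MemLinf f) (u v : EuclideanSpace ℂ (Fin n)) :
    ‖star (ofLp v) ⬝ᵥ (gToeplitz n g f *ᵥ ofLp u)‖ ≤ linfNorm f * ‖v‖ * ‖u‖ := by
  have hr : Function.Injective fun r : Fin n => (r : ℤ) :=
    Nat.cast_injective.comp Fin.val_injective
  have hs : Function.Injective fun s : Fin n => (g * s : ℤ) :=
    (mul_right_injective₀ (by exact_mod_cast hg.ne')).comp hr
  rw [star_dotProduct_gToeplitz_mulVec (hf.integrable le_top), norm_mul, norm_inv,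
    EuclideanSpace.norm_eq, EuclideanSpace.norm_eq]
  calc _ ≤ ‖2 * (π : ℂ)‖⁻¹ * (2 * π * linfNorm f * √(∑ r, ‖v r‖ ^ 2) * √(∑ s, ‖u s‖ ^ 2)) :=
        by gcongr; exact norm_integral_mul_conj_trigPoly_mul_trigPoly_le hf hr hs _ _
    _ = _ := by
        rw [show ‖2 * (π : ℂ)‖ = 2 * π by exact_mod_cast Complex.norm_of_nonneg Real.two_pi_pos.le]
        field_simp

/-- **Lemma (uniform boundedness of g-Toeplitz matrices).** -/
theorem specNorm_gToeplitz_le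
    (f : ℝ → ℂ) (hf : MemLinf f) (g : ℕ) (hg : 0 < g) :
    ∀ n, specNorm (gToeplitz n g f) ≤ linfNorm f := fun n =>
  (gToeplitz n g f).norm_toEuclideanCLM_le_of_norm_dotProduct_le ENNReal.toReal_nonneg
    (norm_star_dotProduct_gToeplitz_mulVec_le hg hf)
end
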